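/- arXiv:2010.10072 — 2 statements merged into one kernel-verified Lean document; each statement's English description precedes it below -/
import Mathlib

section
/- For every real k ≥ 1 + 1/arcsinh(1) (arcsinh(1) = Real.arsinh 1), the conic domain {w ∈ ℂ : Re(w) > k·|w - 1|} is contained in Ω_ρ = ρ '' 𝔻; consequently the class k-ST of k-starlike functions is contained in S*_ρ. -/
open Complex

/-- Principal branch of the complex inverse hyperbolic sine. -/
noncomputable def carcsinh (z : ℂ) : ℂ := Complex.log (z + (1 + z ^ 2) ^ ((1 : ℂ) / 2))

/-- The function `ρ(z) = 1 + arcsinh z`. -/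
noncomputable def ρ (z : ℂ) : ℂ := 1 + carcsinh z

/-- The open unit disk in `ℂ`. -/
def unitDisk : Set ℂ := {z : ℂ | ‖z‖ < 1}

/-- The petal-shaped domain `Ω_ρ = ρ '' 𝔻`. -/
noncomputable def OmegaRho : Set ℂ := ρ '' unitDisk

/-!
The cone `k |w - 1| < Re w` lies in the disk `|w - 1| < arsinh 1` as soon as
`k - 1 ≥ 1 / arsinh 1`, because `Re w ≤ 1 + |w - 1|`. Every `w` in that disk is
`ρ (sinh (w - 1))`: the point `sinh (w - 1)` lies in `𝔻` since the Taylor coefficients of `sinh`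
are nonnegative, so `|sinh u| ≤ sinh |u| < sinh (arsinh 1) = 1`; and the principal branch inverts
`sinh` on the strip `|Im u| < π / 2`, where `cosh u` is the principal square root of
`1 + sinh² u`.
-/

lemma Complex.norm_sinh_le_sinh_norm (z : ℂ) : ‖sinh z‖ ≤ Real.sinh ‖z‖ :=
  (hasSum_sinh z).norm_le_of_bounded (Real.hasSum_sinh ‖z‖) fun n => by simp [norm_pow]

lemma Complex.cosh_re (u : ℂ) : (cosh u).re = Real.cosh u.re * Real.cos u.im := by
  conv_lhs => rw [← re_add_im u, cosh_add, cosh_mul_I, sinh_mul_I]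
  simp [cos_ofReal_re, cosh_ofReal_im, sin_ofReal_im]

lemma Complex.cosh_re_pos {u : ℂ} (hu : |u.im| < Real.pi / 2) : 0 < (cosh u).re := by
  rw [cosh_re]
  exact mul_pos (Real.cosh_pos _) (Real.cos_pos_of_mem_Ioo (abs_lt.1 hu))

lemma carcsinh_sinh {u : ℂ} (hu : |u.im| < Real.pi / 2) : carcsinh (sinh u) = u := by
  have hsqrt : (1 + sinh u ^ 2) ^ ((1 : ℂ) / 2) = cosh u := by
    rw [← add_comm _ (1 : ℂ), ← cosh_sq, one_div, sq_cpow_two_inv (cosh_re_pos hu)]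
  obtain ⟨him_lower, him_upper⟩ := abs_lt.1 hu
  rw [carcsinh, hsqrt, sinh_add_cosh]
  exact log_exp (by linarith [Real.pi_pos]) (by linarith [Real.pi_pos])

lemma Real.arsinh_one_lt_one : Real.arsinh 1 < 1 := by
  simpa using Real.arsinh_lt_arsinh.2 (Real.self_lt_sinh_iff.2 one_pos)

lemma ball_one_arsinh_one_subset_OmegaRho : Metric.ball 1 (Real.arsinh 1) ⊆ OmegaRho := by
  intro w hw
  rw [mem_ball_iff_norm] at hw
  refine ⟨sinh (w - 1), ?_, ?_⟩
  · calc ‖sinh (w - 1)‖ ≤ Real.sinh ‖w - 1‖ := norm_sinh_le_sinh_norm _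
      _ < Real.sinh (Real.arsinh 1) := Real.sinh_lt_sinh.2 hw
      _ = 1 := Real.sinh_arsinh 1
  · have him : |(w - 1).im| < Real.pi / 2 := by
      linarith [abs_im_le_norm (w - 1), Real.arsinh_one_lt_one, Real.pi_gt_three]
    rw [ρ, carcsinh_sinh him]
    ring

lemma cone_subset_ball_one {a k : ℝ} (ha : 0 < a) (hk : 1 + 1 / a ≤ k) :
    {w : ℂ | k * ‖w - 1‖ < w.re} ⊆ Metric.ball 1 a := by
  intro w hw
  rw [Set.mem_ofPred_eq] at hw
  rw [mem_ball_iff_norm, ← div_lt_one ha, div_eq_mul_one_div, mul_comm]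
  have hre : w.re ≤ ‖w - 1‖ + 1 := by simpa using re_le_norm (w - 1)
  have : 1 / a * ‖w - 1‖ ≤ (k - 1) * ‖w - 1‖ := by gcongr; linarith
  linarith

/-- For `k ≥ 1 + 1/arcsinh 1`, the conic domain `{w : Re w > k |w - 1|}` is contained
in `Ω_ρ`; consequently every `k`-starlike function belongs to `S*_ρ` (its quantity
`z f'(z)/f(z)` takes values in `Ω_ρ`). -/
theorem conic_subset_OmegaRho (k : ℝ) (hk : 1 + 1 / Real.arsinh 1 ≤ k) :
    {w : ℂ | k * ‖w - 1‖ < w.re} ⊆ OmegaRho ∧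
    ∀ f : ℂ → ℂ, AnalyticOnNhd ℂ f unitDisk → f 0 = 0 → deriv f 0 = 1 →
      (∀ z ∈ unitDisk, z ≠ 0 →
        k * ‖z * deriv f z / f z - 1‖ < (z * deriv f z / f z).re) →
      ∀ z ∈ unitDisk, z ≠ 0 → z * deriv f z / f z ∈ OmegaRho := by
  have hcone : {w : ℂ | k * ‖w - 1‖ < w.re} ⊆ OmegaRho :=
    (cone_subset_ball_one (Real.arsinh_pos_iff.2 one_pos) hk).trans
      ball_one_arsinh_one_subset_OmegaRho
  exact ⟨hcone, fun f _ _ _ hstar z hz hz0 => hcone (hstar z hz hz0)⟩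
end

section
/- Let f ∈ S*_ρ. (a) If 1 − arcsinh(1) ≤ α < 1, then for every z with 0 < |z| < sinh(1 − α) (Real.sinh), f(z) ≠ 0 and Re(z·f'(z)/f(z)) > α. (b) If 1 < β ≤ 1 + arcsinh(1), then for every z with 0 < |z| < sinh(β − 1), f(z) ≠ 0 and Re(z·f'(z)/f(z)) < β. -/
open Complex

/-- The class `S*_ρ`: analytic normalized functions with `z f'(z)/f(z)` subordinate to
`ρ(z) = 1 + arcsinh z` via a Schwarz function `ω`. -/
def SstarRho (f : ℂ → ℂ) : Prop :=
  AnalyticOnNhd ℂ f unitDisk ∧ f 0 = 0 ∧ deriv f 0 = 1 ∧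
    ∃ ω : ℂ → ℂ, AnalyticOnNhd ℂ ω unitDisk ∧ ω 0 = 0 ∧
      (∀ z ∈ unitDisk, ‖ω z‖ ≤ ‖z‖) ∧
      ∀ z ∈ unitDisk, z * deriv f z = f z * ρ (ω z)

/-! With `u = √(1 + w²)`, the numbers `w + u` and `u - w` are reciprocal and both have modulus at
most `‖w‖ + √(1 + ‖w‖²) = exp (arsinh ‖w‖)`, so `|Re (arsinh w)| = |log ‖w + u‖| ≤ arsinh ‖w‖`.
As `z f'(z) / f(z) = ρ (ω z)` with `‖ω z‖ ≤ ‖z‖`, this gives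
`|Re (z f'(z) / f(z)) - 1| ≤ arsinh ‖z‖ < t` whenever `‖z‖ < sinh t`; take `t = 1 - α` and
`t = β - 1`.

The division is legitimate: at a zero `z₀ ≠ 0` of `f` the logarithmic derivative `f'/f = ρ(ω z)/z`
would stay bounded, whereas it has a simple pole at every isolated zero; and `f` cannot vanish
identically near `z₀` by the identity theorem, since `f'(0) = 1`. -/

open Filter Topology Asymptotics

theorem abs_re_carcsinh_le (w : ℂ) : |(carcsinh w).re| ≤ Real.arsinh ‖w‖ := by
  set u := (1 + w ^ 2) ^ ((1 : ℂ) / 2)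
  have hu : u ^ 2 = 1 + w ^ 2 := by simp [u]
  have hprod : (w + u) * (u - w) = 1 := by linear_combination hu
  have hnorm_u : ‖u‖ ≤ √(1 + ‖w‖ ^ 2) := by
    refine Real.le_sqrt_of_sq_le ?_
    calc ‖u‖ ^ 2 = ‖1 + w ^ 2‖ := by rw [← norm_pow, hu]
      _ ≤ 1 + ‖w‖ ^ 2 := (norm_add_le _ _).trans (by simp)
  have hexp := Real.exp_arsinh ‖w‖
  have hle : ‖w + u‖ ≤ Real.exp (Real.arsinh ‖w‖) := (norm_add_le _ _).trans (by linarith)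
  have hle' : ‖u - w‖ ≤ Real.exp (Real.arsinh ‖w‖) := (norm_sub_le _ _).trans (by linarith)
  have hinv : ‖w + u‖⁻¹ = ‖u - w‖ := by rw [← norm_inv, inv_eq_of_mul_eq_one_right hprod]
  have hpos : 0 < ‖w + u‖ := norm_pos_iff.2 (left_ne_zero_of_mul_eq_one hprod)
  rw [carcsinh, Complex.log_re, abs_le, neg_le, ← Real.log_inv, hinv]
  exact ⟨(Real.log_le_iff_le_exp (hinv ▸ inv_pos.2 hpos)).2 hle',
    (Real.log_le_iff_le_exp hpos).2 hle⟩

theorem norm_rho_le (w : ℂ) : ‖ρ w‖ ≤ 1 + Real.arsinh ‖w‖ + Real.pi := by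
  have him : |(carcsinh w).im| ≤ Real.pi := by
    rw [carcsinh, Complex.log_im]
    exact Complex.abs_arg_le_pi _
  calc ‖ρ w‖ ≤ 1 + ‖carcsinh w‖ := (norm_add_le _ _).trans (by simp)
    _ ≤ 1 + (|(carcsinh w).re| + |(carcsinh w).im|) := by
      gcongr; exact Complex.norm_le_abs_re_add_abs_im _
    _ ≤ 1 + Real.arsinh ‖w‖ + Real.pi := by linarith [abs_re_carcsinh_le w]

theorem AnalyticAt.eventually_eq_zero_of_deriv_isBigO {𝕜 : Type*} [NontriviallyNormedField 𝕜]
    [CompleteSpace 𝕜] [CharZero 𝕜] {f : 𝕜 → 𝕜} {z₀ : 𝕜} (hf : AnalyticAt 𝕜 f z₀)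
    (h₀ : f z₀ = 0) (hO : deriv f =O[𝓝[≠] z₀] f) : ∀ᶠ z in 𝓝 z₀, f z = 0 := by
  by_contra hne
  have hord_top : meromorphicOrderAt f z₀ ≠ ⊤ := by
    simpa [hf.meromorphicOrderAt_eq, analyticOrderAt_eq_top] using hne
  have hord_zero : meromorphicOrderAt f z₀ ≠ 0 := by
    simpa [hf.meromorphicOrderAt_eq] using analyticOrderAt_ne_zero.2 ⟨hf, h₀⟩
  have hpole : Tendsto (fun z => ‖logDeriv f z‖) (𝓝[≠] z₀) atTop := by
    refine tendsto_norm_atTop_iff_cobounded.2 (tendsto_cobounded_of_meromorphicOrderAt_neg ?_)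
    rw [meromorphicOrderAt_logDeriv_eq_neg_one hf.meromorphicAt hord_zero hord_top]
    decide
  obtain ⟨C, hC⟩ := hO.bound
  have hbdd : ∀ᶠ z in 𝓝[≠] z₀, ‖logDeriv f z‖ ≤ max C 0 := by
    filter_upwards [hC] with z hz
    rw [logDeriv_apply, norm_div]
    rcases eq_or_ne (f z) 0 with h | h
    · simp [h]
    · exact div_le_of_le_mul₀ (norm_nonneg _) (le_max_right _ _)
        (hz.trans (by gcongr; exact le_max_left _ _))
  obtain ⟨z, hz, hz'⟩ := (hbdd.and (hpole.eventually_gt_atTop (max C 0))).exists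
  exact hz.not_gt hz'

theorem isBigO_deriv_of_mul_deriv_eq {f g : ℂ → ℂ} {z₀ : ℂ} (hz₀ : z₀ ≠ 0)
    (hg : g =O[𝓝 z₀] (fun _ => (1 : ℂ)))
    (heq : ∀ᶠ z in 𝓝 z₀, z * deriv f z = f z * g z) :
    deriv f =O[𝓝 z₀] f := by
  have hinv : (fun z : ℂ => z⁻¹) =O[𝓝 z₀] (fun _ => (1 : ℂ)) :=
    ((continuousAt_inv₀ hz₀).tendsto).isBigO_one ℂ
  have hderiv : deriv f =ᶠ[𝓝 z₀] fun z => f z * (g z * z⁻¹) := by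
    filter_upwards [heq, eventually_ne_nhds hz₀] with z hz hz0
    field_simp
    linear_combination hz
  simpa using hderiv.trans_isBigO ((isBigO_refl f _).mul (hg.mul hinv))

theorem unitDisk_eq_ball : unitDisk = Metric.ball (0 : ℂ) 1 := by
  ext z; simp [unitDisk]

theorem unitDisk_mem_nhds {z : ℂ} (hz : z ∈ unitDisk) : unitDisk ∈ 𝓝 z := by
  rw [unitDisk_eq_ball] at hz ⊢
  exact Metric.isOpen_ball.mem_nhds hz

namespace SstarRho

variable {f : ℂ → ℂ}

theorem apply_ne_zero (hf : SstarRho f) {z : ℂ} (hz : z ∈ unitDisk) (hz₀ : z ≠ 0) :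
    f z ≠ 0 := by
  obtain ⟨hfa, -, hd, ω, -, -, hωb, heq⟩ := hf
  have hdisk := unitDisk_mem_nhds hz
  have hρω : (fun z => ρ (ω z)) =O[𝓝 z] (fun _ => (1 : ℂ)) := by
    refine IsBoundedUnder.isBigO_one ℂ <|
      isBoundedUnder_of_eventually_le (a := 1 + Real.arsinh 1 + Real.pi) ?_
    filter_upwards [hdisk] with w hw
    have : Real.arsinh ‖ω w‖ ≤ Real.arsinh 1 :=
      Real.arsinh_le_arsinh.2 ((hωb w hw).trans (le_of_lt hw))
    linarith [norm_rho_le (ω w)]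
  have hO := isBigO_deriv_of_mul_deriv_eq hz₀ hρω (eventually_of_mem hdisk heq)
  intro hfz
  have hzero : Set.EqOn f 0 unitDisk :=
    hfa.eqOn_zero_of_preconnected_of_eventuallyEq_zero
      (unitDisk_eq_ball ▸ (convex_ball (0 : ℂ) 1).isPreconnected) hz
      ((hfa z hz).eventually_eq_zero_of_deriv_isBigO hfz (hO.mono nhdsWithin_le_nhds))
  have h0 : (0 : ℂ) ∈ unitDisk := by simp [unitDisk]
  have hderiv := (eventuallyEq_of_mem (unitDisk_mem_nhds h0) hzero).deriv_eq
  simp [hd] at hderiv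

theorem abs_re_sub_one_le (hf : SstarRho f) {z : ℂ} (hz : z ∈ unitDisk) (hz₀ : z ≠ 0) :
    |(z * deriv f z / f z).re - 1| ≤ Real.arsinh ‖z‖ := by
  have hfz := hf.apply_ne_zero hz hz₀
  obtain ⟨-, -, -, ω, -, -, hωb, heq⟩ := hf
  rw [heq z hz, mul_div_cancel_left₀ _ hfz, ρ, Complex.add_re, Complex.one_re,
    add_sub_cancel_left]
  exact (abs_re_carcsinh_le _).trans (Real.arsinh_le_arsinh.2 (hωb z hz))

theorem ne_zero_and_abs_re_sub_one_lt (hf : SstarRho f) {t : ℝ} (ht : t ≤ Real.arsinh 1)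
    {z : ℂ} (hz₀ : 0 < ‖z‖) (hz : ‖z‖ < Real.sinh t) :
    f z ≠ 0 ∧ |(z * deriv f z / f z).re - 1| < t := by
  have hz_disk : z ∈ unitDisk :=
    hz.trans_le ((Real.sinh_le_sinh.2 ht).trans (Real.sinh_arsinh 1).le)
  refine ⟨hf.apply_ne_zero hz_disk (norm_pos_iff.1 hz₀), ?_⟩
  calc |(z * deriv f z / f z).re - 1| ≤ Real.arsinh ‖z‖ :=
        hf.abs_re_sub_one_le hz_disk (norm_pos_iff.1 hz₀)
    _ < t := by rwa [← Real.sinh_lt_sinh, Real.sinh_arsinh]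

end SstarRho

/-- Radius results for `f ∈ S*_ρ`:
(a) for `1 - arcsinh 1 ≤ α < 1`, `f` is starlike of order `α` in `|z| < sinh (1 - α)`;
(b) for `1 < β ≤ 1 + arcsinh 1`, `f ∈ M(β)` in `|z| < sinh (β - 1)`. -/
theorem SstarRho_radius_starlike_M (f : ℂ → ℂ) (hf : SstarRho f) :
    (∀ α : ℝ, 1 - Real.arsinh 1 ≤ α → α < 1 →
      ∀ z : ℂ, 0 < ‖z‖ → ‖z‖ < Real.sinh (1 - α) →
        f z ≠ 0 ∧ α < (z * deriv f z / f z).re) ∧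
    (∀ β : ℝ, 1 < β → β ≤ 1 + Real.arsinh 1 →
      ∀ z : ℂ, 0 < ‖z‖ → ‖z‖ < Real.sinh (β - 1) →
        f z ≠ 0 ∧ (z * deriv f z / f z).re < β) := by
  refine ⟨fun α hα _ z hz₀ hz => ?_, fun β _ hβ z hz₀ hz => ?_⟩
  · obtain ⟨hfz, hre⟩ := hf.ne_zero_and_abs_re_sub_one_lt (by linarith) hz₀ hz
    exact ⟨hfz, by linarith [(abs_lt.1 hre).1]⟩
  · obtain ⟨hfz, hre⟩ := hf.ne_zero_and_abs_re_sub_one_lt (by linarith) hz₀ hz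
    exact ⟨hfz, by linarith [(abs_lt.1 hre).2]⟩
end
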